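/- arXiv:1801.08904 — 2 statements merged into one kernel-verified Lean document; each statement's English description precedes it below -/
import Mathlib

section
/- Let 0 < α < 1 and let f : ℝ → ℝ be continuously differentiable on [0,T]. Then for every t ∈ (0,T], D_*^α f(t) = (1/(1−α)) ( f(t) − E_{α,1}(−α t^α/(1−α)) f(0) ) − (α/(1−α)²) ∫_0^t f(τ) (t−τ)^{α−1} E_{α,α}(−α (t−τ)^α/(1−α)) dτ. -/
open Set

/-- Two-parameter Mittag-Leffler function `E_{α,β}(z) = ∑ₖ zᵏ / Γ(αk + β)`. -/
noncomputable def mittagLeffler (α β z : ℝ) : ℝ :=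
  ∑' k : ℕ, z ^ k / Real.Gamma (α * k + β)

/-- Atangana–Baleanu fractional derivative of order `α` with base point `0`
(normalization `M(α) = 1`). -/
noncomputable def abDeriv (α : ℝ) (f : ℝ → ℝ) (t : ℝ) : ℝ :=
  (1 / (1 - α)) * ∫ s in (0:ℝ)..t, deriv f s *
    mittagLeffler α 1 (-α * (t - s) ^ α / (1 - α))

/-!
Differentiating the entire Mittag-Leffler series term by term gives `α E'_{α,1} = E_{α,α}`, so for
`c = -α / (1 - α)` the kernel `s ↦ E_{α,1}(c (t - s)^α)` has derivative
`c (t - s)^(α-1) E_{α,α}(c (t - s)^α)`, which is integrable up to `s = t` because `α > 0`.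
Integrating by parts against `f` moves the derivative from `f` onto this kernel; the boundary term
at `s = t` is `f t` since `E_{α,1}(0) = 1`.
-/

open MeasureTheory Real Filter

theorem Real.rpow_mul_exp_neg_le_Gamma {x q : ℝ} (hx : 1 ≤ x) (hq : 0 < q) :
    q ^ (x - 1) * exp (-(q + 1)) ≤ Gamma x := by
  have hint : IntegrableOn (fun t ↦ exp (-t) * t ^ (x - 1)) (Ioi 0) :=
    GammaIntegral_convergent (by linarith)
  have hsub : Ioc q (q + 1) ⊆ Ioi 0 := fun t ht ↦ hq.trans ht.1
  calc q ^ (x - 1) * exp (-(q + 1))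
      = volume.real (Ioc q (q + 1)) • (q ^ (x - 1) * exp (-(q + 1))) := by
        simp
    _ ≤ ∫ t in Ioc q (q + 1), exp (-t) * t ^ (x - 1) := by
        refine setIntegral_ge_of_const_le measurableSet_Ioc measure_Ioc_lt_top.ne
          (fun t ht ↦ ?_) (hint.mono_set hsub)
        rw [mul_comm]
        gcongr
        exacts [ht.2, ht.1.le]
    _ ≤ ∫ t in Ioi 0, exp (-t) * t ^ (x - 1) :=
        setIntegral_mono_set hint
          (ae_restrict_of_forall_mem measurableSet_Ioi fun t ht ↦ by
            have : (0:ℝ) < t := ht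
            positivity)
          (.of_forall hsub)
    _ = Gamma x := (Gamma_eq_integral (by linarith)).symm

theorem summable_norm_pow_div_Gamma {α : ℝ} (hα : 0 < α) (β z : ℝ) :
    Summable fun k : ℕ ↦ ‖z ^ k / Gamma (α * k + β)‖ := by
  set q := (‖z‖ + 1) ^ α⁻¹
  have hq : 0 < q := by positivity
  have hqα : q ^ α = ‖z‖ + 1 := rpow_inv_rpow (by positivity) hα.ne'
  -- Choosing `q ^ α = ‖z‖ + 1` in the Gamma lower bound makes the terms eventually geometric.
  set r := ‖z‖ / (‖z‖ + 1)
  have hr : r < 1 := (div_lt_one (by positivity)).2 (lt_add_one _)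
  refine .of_norm_bounded_eventually_nat
    ((summable_geometric_of_lt_one (by positivity) hr).mul_left (exp (q + 1) * q ^ (1 - β))) ?_
  have hlarge : ∀ᶠ k : ℕ in atTop, 1 ≤ α * k + β :=
    (tendsto_natCast_atTop_atTop.const_mul_atTop hα).atTop_add tendsto_const_nhds
      |>.eventually_ge_atTop 1
  filter_upwards [hlarge] with k hk
  have hΓ := rpow_mul_exp_neg_le_Gamma hk hq
  have hsplit : q ^ (α * k + β - 1) = (‖z‖ + 1) ^ k / q ^ (1 - β) := by
    rw [← hqα, ← rpow_natCast, ← rpow_mul hq.le, ← rpow_sub hq]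
    ring_nf
  rw [norm_norm, norm_div, norm_pow, Real.norm_of_nonneg (hΓ.trans' (by positivity))]
  calc ‖z‖ ^ k / Gamma (α * k + β) ≤ ‖z‖ ^ k / (q ^ (α * k + β - 1) * exp (-(q + 1))) := by
        gcongr
    _ = exp (q + 1) * q ^ (1 - β) * r ^ k := by
        rw [hsplit, exp_neg, div_pow]
        field_simp

theorem hasDerivAt_mittagLeffler {α : ℝ} (hα : 0 < α) (β z : ℝ) :
    HasDerivAt (mittagLeffler α β) (∑' k : ℕ, k * z ^ (k - 1) / Gamma (α * k + β)) z := by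
  set r := |z| + 1
  have hz : z ∈ Ioo (-r) r := abs_lt.1 (lt_add_one _)
  have hbound (k : ℕ) (y : ℝ) (hy : y ∈ Ioo (-r) r) :
      ‖k * y ^ (k - 1) / Gamma (α * k + β)‖ ≤ ‖(2 * r) ^ k / Gamma (α * k + β)‖ := by
    have hr : 1 ≤ r := le_add_of_nonneg_left (abs_nonneg z)
    have hk : (k : ℝ) ≤ 2 ^ k := by exact_mod_cast k.lt_two_pow_self.le
    have hy' : |y| ^ (k - 1) ≤ r ^ k :=
      (pow_le_pow_left₀ (abs_nonneg y) (abs_lt.2 hy).le _).trans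
        (pow_le_pow_right₀ hr (Nat.sub_le k 1))
    simp only [norm_div, norm_mul, norm_pow, Real.norm_eq_abs, Nat.abs_cast, abs_two,
      abs_of_pos (by positivity : (0:ℝ) < r), mul_pow]
    gcongr
  exact hasDerivAt_tsum_of_isPreconnected (summable_norm_pow_div_Gamma hα β (2 * r)) isOpen_Ioo
    isPreconnected_Ioo (fun k y _ ↦ (hasDerivAt_pow k y).div_const _) hbound hz
    (summable_norm_pow_div_Gamma hα β z).of_norm hz

theorem hasDerivAt_mittagLeffler_one {α : ℝ} (hα : 0 < α) (z : ℝ) :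
    HasDerivAt (mittagLeffler α 1) (mittagLeffler α α z / α) z := by
  convert hasDerivAt_mittagLeffler hα 1 z using 1
  have hterm (k : ℕ) : ((k + 1 : ℕ) : ℝ) * z ^ (k + 1 - 1) / Gamma (α * (k + 1 : ℕ) + 1) =
      z ^ k / Gamma (α * k + α) / α := by
    have hk : α * k + α ≠ 0 := by positivity
    rw [Nat.add_sub_cancel, Nat.cast_succ, mul_add_one, Gamma_add_one hk]
    field_simp
  rw [tsum_eq_zero_add' ?_, tsum_congr hterm, tsum_div_const]
  · simp [mittagLeffler]
  · simpa only [hterm] using ((summable_norm_pow_div_Gamma hα α z).of_norm.div_const α)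

theorem continuous_mittagLeffler {α : ℝ} (hα : 0 < α) (β : ℝ) : Continuous (mittagLeffler α β) :=
  continuous_iff_continuousAt.2 fun z ↦ (hasDerivAt_mittagLeffler hα β z).continuousAt

theorem mittagLeffler_zero (α β : ℝ) : mittagLeffler α β 0 = (Gamma β)⁻¹ := by
  rw [mittagLeffler, tsum_eq_single 0 fun k hk ↦ by simp [hk]]
  simp

theorem hasDerivAt_mittagLeffler_one_mul_rpow {α : ℝ} (hα : 0 < α) (c : ℝ) {u : ℝ} (hu : 0 < u) :
    HasDerivAt (fun v ↦ mittagLeffler α 1 (c * v ^ α))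
      (c * u ^ (α - 1) * mittagLeffler α α (c * u ^ α)) u := by
  refine ((hasDerivAt_mittagLeffler_one hα _).comp u
    ((hasDerivAt_rpow_const (p := α) (Or.inl hu.ne')).const_mul c)).congr_deriv ?_
  field_simp

theorem ContDiffOn.intervalIntegrable_deriv {f : ℝ → ℝ} {a b : ℝ} (hab : a < b)
    (hf : ContDiffOn ℝ 1 f (Icc a b)) : IntervalIntegrable (deriv f) volume a b := by
  have hcont := hf.continuousOn_derivWithin (uniqueDiffOn_Icc hab) le_rfl
  refine (hcont.intervalIntegrable_of_Icc hab.le).congr_uIoo fun x hx ↦ ?_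
  rw [uIoo_of_le hab.le] at hx
  exact derivWithin_of_mem_nhds (Icc_mem_nhds hx.1 hx.2)

theorem integral_deriv_mul_mittagLeffler {α : ℝ} (hα : 0 < α) (c : ℝ) {f : ℝ → ℝ} {a b : ℝ}
    (hab : a < b) (hf : ContDiffOn ℝ 1 f (Icc a b)) :
    ∫ s in a..b, deriv f s * mittagLeffler α 1 (c * (b - s) ^ α) =
      f b - mittagLeffler α 1 (c * (b - a) ^ α) * f a +
        c * ∫ s in a..b, f s * (b - s) ^ (α - 1) * mittagLeffler α α (c * (b - s) ^ α) := by
  set K := fun s ↦ mittagLeffler α 1 (c * (b - s) ^ α)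
  set K' := fun s ↦ -(c * (b - s) ^ (α - 1) * mittagLeffler α α (c * (b - s) ^ α))
  have hK : Continuous K := by
    have := continuous_mittagLeffler hα 1
    have := continuous_rpow_const hα.le
    fun_prop
  have hKK' : ∀ s ∈ Ioo (min a b) (max a b), HasDerivAt K (K' s) s := by
    intro s hs
    rw [min_eq_left hab.le, max_eq_right hab.le] at hs
    exact (hasDerivAt_mittagLeffler_one_mul_rpow hα c (sub_pos.2 hs.2)).comp_const_sub b s
  have hff' : ∀ s ∈ Ioo (min a b) (max a b), HasDerivAt f (deriv f s) s := by
    intro s hs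
    rw [min_eq_left hab.le, max_eq_right hab.le] at hs
    exact ((hf.differentiableOn one_ne_zero s (Ioo_subset_Icc_self hs)).differentiableAt
      (Icc_mem_nhds hs.1 hs.2)).hasDerivAt
  have hK' : IntervalIntegrable K' volume a b := by
    have hpow : IntervalIntegrable (fun s ↦ (b - s) ^ (α - 1)) volume a b := by
      simpa using (intervalIntegral.intervalIntegrable_rpow' (a := b - a) (b := 0)
        (r := α - 1) (by linarith)).comp_sub_left b
    have := continuous_mittagLeffler hα α
    have := continuous_rpow_const hα.le
    refine ((hpow.const_mul c).mul_continuousOn ?_).neg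
    fun_prop
  have hibp := intervalIntegral.integral_mul_deriv_eq_deriv_mul_of_hasDerivAt hK.continuousOn
    (uIcc_of_le hab.le ▸ hf.continuousOn) hKK' hff' hK' (hf.intervalIntegrable_deriv hab)
  have hKb : K b = 1 := by
    simp [K, zero_rpow hα.ne', mittagLeffler_zero]
  have hK'f : ∫ s in a..b, K' s * f s =
      -(c * ∫ s in a..b, f s * (b - s) ^ (α - 1) * mittagLeffler α α (c * (b - s) ^ α)) := by
    rw [← intervalIntegral.integral_const_mul, ← intervalIntegral.integral_neg]
    congr 1 with s
    ring
  calc ∫ s in a..b, deriv f s * K s = ∫ s in a..b, K s * deriv f s := by simp only [mul_comm]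
    _ = _ := by rw [hibp, hKb, hK'f]; ring

theorem abDeriv_eq_general (α T : ℝ) (hα0 : 0 < α)
    (f : ℝ → ℝ) (hf : ContDiffOn ℝ 1 f (Icc 0 T)) :
    ∀ t ∈ Ioc 0 T,
      abDeriv α f t =
        (1 / (1 - α)) * (f t - mittagLeffler α 1 (-α * t ^ α / (1 - α)) * f 0)
        - (α / (1 - α) ^ 2) * ∫ τ in (0:ℝ)..t,
            f τ * (t - τ) ^ (α - 1) *
              mittagLeffler α α (-α * (t - τ) ^ α / (1 - α)) := by
  rintro t ⟨ht0, htT⟩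
  have hibp := integral_deriv_mul_mittagLeffler hα0 (-α / (1 - α)) ht0
    (hf.mono (Icc_subset_Icc_right htT))
  have harg (x : ℝ) : -α * x / (1 - α) = -α / (1 - α) * x := by ring
  simp only [abDeriv, harg, sub_zero] at hibp ⊢
  -- `ring` expands `(1 - α) ^ 2` before inverting it, so present the factor as `(1 - α)⁻¹ ^ 2`.
  rw [hibp, div_eq_mul_inv α, ← inv_pow]
  ring

/-- Alternative representation of the Atangana–Baleanu fractional derivative,
obtained by integration by parts. -/
theorem abDeriv_eq (α T : ℝ) (hα0 : 0 < α) (hα1 : α < 1) (hT : 0 < T)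
    (f : ℝ → ℝ) (hf : ContDiffOn ℝ 1 f (Icc 0 T)) :
    ∀ t ∈ Ioc 0 T,
      abDeriv α f t =
        (1 / (1 - α)) * (f t - mittagLeffler α 1 (-α * t ^ α / (1 - α)) * f 0)
        - (α / (1 - α) ^ 2) * ∫ τ in (0:ℝ)..t,
            f τ * (t - τ) ^ (α - 1) *
              mittagLeffler α α (-α * (t - τ) ^ α / (1 - α)) :=
  abDeriv_eq_general α T hα0 f hf
end

section
/- Let 0 < α < 1 and let f : ℝ → ℝ be continuously differentiable on [0,T]. If f attains its maximum over [0,T] at a point t₀ ∈ (0,T), then the Riemann–Liouville fractional derivative of order α of f at t₀ satisfies D^α f(t₀) ≥ (t₀^{−α}/Γ(1−α)) f(t₀). In particular, if f(t₀) ≥ 0 then D^α f(t₀) ≥ 0. -/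
/-!
Write `h_φ(t) = ∫₀ᵗ (t - s)^(-α) φ(s) ds`. The substitution `s = t u` turns `h_f(t)` into
`t^(1-α) ∫₀¹ (1 - u)^(-α) f(t u) du`, which can be differentiated under the integral sign since
`f'` is bounded; so `D^α f(t₀)` exists.

For the inequality compare `f` with the constant `f(t₀)`: the gap `g = f(t₀) - f` is nonnegative
on `[0, T]` and `g(s) ≤ M (t₀ - s)` with `M` a bound for `f'`. Since the kernel `(t - s)^(-α)`
decreases in `t`, `h_g(t₀) - h_g(t) ≤ ∫ₜ^t₀ (t₀ - s)^(-α) g(s) ds ≤ M (t₀ - t)^(2-α)`, so the left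
difference quotients of `h_g` at `t₀` are bounded above by a quantity tending to `0`, and
`h_g'(t₀) ≤ 0`. As `h_f = f(t₀) h_1 - h_g` and `h_1(t) = t^(1-α)/(1-α)`, this is the claim.
-/

open Set

/-- Riemann–Liouville fractional integral of order `β` with base point `0`. -/
noncomputable def rlInt (β : ℝ) (f : ℝ → ℝ) (t : ℝ) : ℝ :=
  (1 / Real.Gamma β) * ∫ s in (0:ℝ)..t, (t - s) ^ (β - 1) * f s

/-- Riemann–Liouville fractional derivative of order `α` (`0 < α < 1`) with base point `0`:
`D^α f = d/dt [I^{1-α} f]`. -/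
noncomputable def rlDeriv (α : ℝ) (f : ℝ → ℝ) (t : ℝ) : ℝ :=
  deriv (rlInt (1 - α) f) t

open Filter Topology MeasureTheory intervalIntegral

lemma ContDiffOn.exists_norm_deriv_le {f : ℝ → ℝ} {a b : ℝ} (hf : ContDiffOn ℝ 1 f (Icc a b))
    (hab : a < b) : ∃ M, ∀ x ∈ Ioo a b, ‖deriv f x‖ ≤ M := by
  obtain ⟨M, hM⟩ := isCompact_Icc.exists_bound_of_continuousOn
    (hf.continuousOn_derivWithin (uniqueDiffOn_Icc hab) le_rfl)
  refine ⟨M, fun x hx => ?_⟩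
  rw [← derivWithin_of_mem_nhds (Icc_mem_nhds hx.1 hx.2)]
  exact hM x (Ioo_subset_Icc_self hx)

lemma abs_sub_le_of_norm_deriv_le {f : ℝ → ℝ} {a b M : ℝ} (hab : a ≤ b)
    (hfc : ContinuousOn f (Icc a b)) (hfd : DifferentiableOn ℝ f (Ioo a b))
    (hM : ∀ x ∈ Ioo a b, ‖deriv f x‖ ≤ M) : |f b - f a| ≤ M * (b - a) := by
  rcases hab.eq_or_lt with rfl | hab
  · simp
  obtain ⟨c, hc, hslope⟩ := exists_deriv_eq_slope f hab hfc hfd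
  rw [eq_div_iff (sub_ne_zero.2 hab.ne')] at hslope
  rw [← Real.norm_eq_abs, ← hslope, norm_mul, Real.norm_of_nonneg (sub_nonneg.2 hab.le)]
  exact mul_le_mul_of_nonneg_right (hM c hc) (sub_nonneg.2 hab.le)

lemma HasDerivAt.nonpos_of_sub_le_rpow {h : ℝ → ℝ} {d x C p : ℝ} (hd : HasDerivAt h d x)
    (hp : 1 < p) (hle : ∀ᶠ t in 𝓝[<] x, h x - h t ≤ C * (x - t) ^ p) : d ≤ 0 := by
  have hslope : Tendsto (slope h x) (𝓝[<] x) (𝓝 d) :=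
    (hasDerivAt_iff_tendsto_slope.1 hd).mono_left (nhdsLT_le_nhdsNE x)
  have hbound : Tendsto (fun t => C * (x - t) ^ (p - 1)) (𝓝[<] x) (𝓝 0) := by
    have hcont : ContinuousAt (fun t => C * (x - t) ^ (p - 1)) x :=
      continuousAt_const.mul ((Real.continuousAt_rpow_const _ _ (Or.inr (by linarith))).comp
        (continuousAt_const.sub continuousAt_id))
    simpa [Real.zero_rpow (by linarith : p - 1 ≠ 0)] using
      hcont.tendsto.mono_left nhdsWithin_le_nhds
  refine le_of_tendsto_of_tendsto hslope hbound ?_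
  filter_upwards [hle, self_mem_nhdsWithin] with t ht htx
  have hxt : 0 < x - t := sub_pos.2 htx
  rw [slope_def_field, Real.rpow_sub_one hxt.ne', ← neg_div_neg_eq, neg_sub, neg_sub,
    mul_div_assoc']
  exact div_le_div_of_nonneg_right ht hxt.le

lemma intervalIntegrable_rpow_sub_mul {γ a b : ℝ} {g : ℝ → ℝ} (hγ : -1 < γ) (hab : a ≤ b)
    (hg : ContinuousOn g (Icc a b)) :
    IntervalIntegrable (fun s => (b - s) ^ γ * g s) volume a b := by
  have hk : IntervalIntegrable (fun s => (b - s) ^ γ) volume a b := by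
    simpa using ((intervalIntegrable_rpow' hγ (a := 0) (b := b - a)).comp_sub_left b).symm
  exact hk.mul_continuousOn (by rwa [uIcc_of_le hab])

lemma integral_rpow_sub {γ : ℝ} (hγ : -1 < γ) (t : ℝ) :
    ∫ s in (0:ℝ)..t, (t - s) ^ γ = t ^ (γ + 1) / (γ + 1) := by
  rw [integral_comp_sub_left (fun s => s ^ γ), sub_self, sub_zero, integral_rpow (Or.inl hγ),
    Real.zero_rpow (by linarith), sub_zero]

lemma integral_rpow_sub_mul_sub_le {γ L x τ : ℝ} {g : ℝ → ℝ} (hγ : γ ∈ Ioc (-1) 0)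
    (hτ : 0 ≤ τ) (hτx : τ ≤ x) (hgc : ContinuousOn g (Icc 0 x))
    (hg0 : ∀ s ∈ Icc 0 x, 0 ≤ g s) (hgL : ∀ s ∈ Icc 0 x, g s ≤ L * (x - s)) :
    (∫ s in (0:ℝ)..x, (x - s) ^ γ * g s) - ∫ s in (0:ℝ)..τ, (τ - s) ^ γ * g s
      ≤ L * (x - τ) ^ (γ + 2) := by
  have hI := intervalIntegrable_rpow_sub_mul hγ.1 (hτ.trans hτx) hgc
  have hIτ := intervalIntegrable_rpow_sub_mul hγ.1 hτ (hgc.mono (Icc_subset_Icc_right hτx))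
  have hI₁ : IntervalIntegrable (fun s => (x - s) ^ γ * g s) volume 0 τ :=
    hI.mono_set (by simp [uIcc_of_le hτ, uIcc_of_le (hτ.trans hτx), Icc_subset_Icc_right hτx])
  have hI₂ : IntervalIntegrable (fun s => (x - s) ^ γ * g s) volume τ x :=
    hI.mono_set (by simp [uIcc_of_le hτx, uIcc_of_le (hτ.trans hτx), Icc_subset_Icc_left hτ])
  have hleft : ∫ s in (0:ℝ)..τ, (x - s) ^ γ * g s ≤ ∫ s in (0:ℝ)..τ, (τ - s) ^ γ * g s := by
    refine integral_mono_on_of_le_Ioo hτ hI₁ hIτ fun s hs => ?_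
    refine mul_le_mul_of_nonneg_right ?_ (hg0 s ⟨hs.1.le, hs.2.le.trans hτx⟩)
    exact Real.rpow_le_rpow_of_nonpos (by linarith [hs.2]) (by linarith) hγ.2
  have hright : ∫ s in τ..x, (x - s) ^ γ * g s ≤ ∫ s in τ..x, L * (x - τ) ^ (γ + 1) := by
    refine integral_mono_on_of_le_Ioo hτx hI₂ intervalIntegrable_const fun s hs => ?_
    have hs' : s ∈ Icc 0 x := ⟨hτ.trans hs.1.le, hs.2.le⟩
    have hxs : 0 < x - s := sub_pos.2 hs.2
    have hL : 0 ≤ L := nonneg_of_mul_nonneg_left ((hg0 s hs').trans (hgL s hs')) hxs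
    calc (x - s) ^ γ * g s ≤ (x - s) ^ γ * (L * (x - s)) :=
          mul_le_mul_of_nonneg_left (hgL s hs') (Real.rpow_nonneg hxs.le γ)
      _ = L * (x - s) ^ (γ + 1) := by rw [Real.rpow_add_one hxs.ne']; ring
      _ ≤ L * (x - τ) ^ (γ + 1) := by
          gcongr
          · linarith [hγ.1]
          · linarith [hs.1]
  have hsplit := integral_add_adjacent_intervals hI₁ hI₂
  rw [intervalIntegral.integral_const, smul_eq_mul] at hright
  rw [show γ + 2 = γ + 1 + 1 by ring, Real.rpow_add_one' (sub_nonneg.2 hτx) (by linarith [hγ.1])]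
  linarith

lemma hasDerivAt_integral_rpow_mul_comp_mul {f : ℝ → ℝ} {γ T M t₀ : ℝ} (hγ : -1 < γ)
    (hfc : ContinuousOn f (Icc 0 T)) (hfd : DifferentiableOn ℝ f (Ioo 0 T))
    (hM : ∀ x ∈ Ioo 0 T, ‖deriv f x‖ ≤ M) (ht₀ : t₀ ∈ Ioo 0 T) :
    HasDerivAt (fun t => ∫ u in (0:ℝ)..1, (1 - u) ^ γ * f (t * u))
      (∫ u in (0:ℝ)..1, (1 - u) ^ γ * (deriv f (t₀ * u) * u)) t₀ := by
  have hK : IntervalIntegrable (fun u : ℝ => (1 - u) ^ γ) volume 0 1 := by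
    simpa using intervalIntegrable_rpow_sub_mul (g := fun _ => 1) hγ zero_le_one
      continuousOn_const
  have hmem : ∀ t ∈ Ioo 0 T, ∀ u ∈ Ioc (0:ℝ) 1, t * u ∈ Ioo 0 T := fun t ht u hu =>
    ⟨mul_pos ht.1 hu.1, (mul_le_of_le_one_right ht.1.le hu.2).trans_lt ht.2⟩
  have hint : ∀ t ∈ Ioo 0 T,
      IntervalIntegrable (fun u => (1 - u) ^ γ * f (t * u)) volume 0 1 := by
    intro t ht
    refine hK.mul_continuousOn (hfc.comp (by fun_prop) fun u hu => ?_)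
    rw [uIcc_of_le zero_le_one] at hu
    exact ⟨mul_nonneg ht.1.le hu.1, (mul_le_of_le_one_right ht.1.le hu.2).trans ht.2.le⟩
  refine (hasDerivAt_integral_of_dominated_loc_of_deriv_le (F := fun t u => (1 - u) ^ γ * f (t * u))
    (F' := fun t u => (1 - u) ^ γ * (deriv f (t * u) * u)) (bound := fun u => M * (1 - u) ^ γ)
    (Ioo_mem_nhds ht₀.1 ht₀.2) ?_ (hint t₀ ht₀) ?_ ?_ (hK.const_mul M) ?_).2
  · filter_upwards [Ioo_mem_nhds ht₀.1 ht₀.2] with t ht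
    simpa [uIoc_of_le zero_le_one] using (hint t ht).def'.aestronglyMeasurable
  · have : Measurable fun u => (1 - u) ^ γ * (deriv f (t₀ * u) * u) := by fun_prop
    exact this.aestronglyMeasurable
  · refine ae_of_all _ fun u hu t ht => ?_
    rw [uIoc_of_le zero_le_one] at hu
    have hk := Real.rpow_nonneg (sub_nonneg.2 hu.2) γ
    rw [norm_mul, norm_mul, Real.norm_of_nonneg hk, Real.norm_of_nonneg hu.1.le, mul_comm M]
    exact mul_le_mul_of_nonneg_left
      ((mul_le_of_le_one_right (norm_nonneg _) hu.2).trans (hM _ (hmem t ht u hu))) hk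
  · refine ae_of_all _ fun u hu t ht => ?_
    rw [uIoc_of_le zero_le_one] at hu
    have hf' := hfd.differentiableAt (Ioo_mem_nhds (hmem t ht u hu).1 (hmem t ht u hu).2)
    exact (hf'.hasDerivAt.comp t (hasDerivAt_mul_const u)).const_mul _

lemma rlInt_one {β : ℝ} (hβ : 0 < β) (t : ℝ) :
    rlInt β (fun _ => 1) t = t ^ β / Real.Gamma (β + 1) := by
  rw [rlInt, Real.Gamma_add_one hβ.ne']
  simp only [mul_one]
  rw [integral_rpow_sub (by linarith), sub_add_cancel]
  field_simp

lemma hasDerivAt_rlInt_one {β t : ℝ} (hβ : 0 < β) (ht : t ≠ 0) :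
    HasDerivAt (rlInt β fun _ => 1) (t ^ (β - 1) / Real.Gamma β) t := by
  rw [funext (rlInt_one hβ)]
  refine ((Real.hasDerivAt_rpow_const (p := β) (Or.inl ht)).div_const _).congr_deriv ?_
  rw [Real.Gamma_add_one hβ.ne']
  field_simp

lemma rlInt_const_sub {β t : ℝ} (c : ℝ) {f : ℝ → ℝ} (hβ : 0 < β) (ht : 0 ≤ t)
    (hf : ContinuousOn f (Icc 0 t)) :
    rlInt β (fun s => c - f s) t = c * rlInt β (fun _ => 1) t - rlInt β f t := by
  have hc := intervalIntegrable_rpow_sub_mul (by linarith : -1 < β - 1) ht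
    (continuousOn_const (c := c))
  have hf := intervalIntegrable_rpow_sub_mul (by linarith : -1 < β - 1) ht hf
  simp only [rlInt, mul_sub, mul_one, integral_sub hc hf, intervalIntegral.integral_mul_const]
  ring

lemma rlInt_eq_rpow_mul_integral {β t : ℝ} (f : ℝ → ℝ) (ht : 0 < t) :
    rlInt β f t = t ^ β / Real.Gamma β * ∫ u in (0:ℝ)..1, (1 - u) ^ (β - 1) * f (t * u) := by
  have hsub : ∫ u in (0:ℝ)..1, (t - t * u) ^ (β - 1) * f (t * u)
      = t⁻¹ * ∫ s in (0:ℝ)..t, (t - s) ^ (β - 1) * f s := by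
    simpa using integral_comp_mul_left (a := 0) (b := 1)
      (fun s => (t - s) ^ (β - 1) * f s) ht.ne'
  have hscale : ∫ u in (0:ℝ)..1, (t - t * u) ^ (β - 1) * f (t * u)
      = t ^ (β - 1) * ∫ u in (0:ℝ)..1, (1 - u) ^ (β - 1) * f (t * u) := by
    rw [← intervalIntegral.integral_const_mul]
    refine integral_congr fun u hu => ?_
    rw [uIcc_of_le zero_le_one] at hu
    simp only [show t - t * u = t * (1 - u) by ring, Real.mul_rpow ht.le (sub_nonneg.2 hu.2)]
    ring
  rw [rlInt, ← mul_inv_cancel_left₀ ht.ne' (∫ s in (0:ℝ)..t, _), ← hsub, hscale,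
    Real.rpow_sub_one ht.ne']
  field_simp

lemma differentiableAt_rlInt {f : ℝ → ℝ} {β T M t₀ : ℝ} (hβ : 0 < β)
    (hfc : ContinuousOn f (Icc 0 T)) (hfd : DifferentiableOn ℝ f (Ioo 0 T))
    (hM : ∀ x ∈ Ioo 0 T, ‖deriv f x‖ ≤ M) (ht₀ : t₀ ∈ Ioo 0 T) :
    DifferentiableAt ℝ (rlInt β f) t₀ := by
  have hA := hasDerivAt_integral_rpow_mul_comp_mul (by linarith : -1 < β - 1) hfc hfd hM ht₀
  have hpow : DifferentiableAt ℝ (fun t : ℝ => t ^ β) t₀ :=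
    (Real.hasDerivAt_rpow_const (Or.inl ht₀.1.ne')).differentiableAt
  refine ((hpow.div_const (Real.Gamma β)).mul hA.differentiableAt).congr_of_eventuallyEq ?_
  filter_upwards [Ioi_mem_nhds ht₀.1] with t ht using rlInt_eq_rpow_mul_integral f ht

lemma rlInt_sub_rlInt_le {β L x τ : ℝ} {g : ℝ → ℝ} (hβ : β ∈ Ioc 0 1)
    (hτ : 0 ≤ τ) (hτx : τ ≤ x) (hgc : ContinuousOn g (Icc 0 x))
    (hg0 : ∀ s ∈ Icc 0 x, 0 ≤ g s) (hgL : ∀ s ∈ Icc 0 x, g s ≤ L * (x - s)) :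
    rlInt β g x - rlInt β g τ ≤ L / Real.Gamma β * (x - τ) ^ (β + 1) := by
  have h := integral_rpow_sub_mul_sub_le (γ := β - 1) ⟨by linarith [hβ.1], by linarith [hβ.2]⟩
    hτ hτx hgc hg0 hgL
  rw [show β - 1 + 2 = β + 1 by ring] at h
  rw [rlInt, rlInt, ← mul_sub, one_div_mul_eq_div, div_mul_eq_mul_div]
  exact div_le_div_of_nonneg_right h (Real.Gamma_pos_of_pos hβ.1).le

/-- Extremum principle for the Riemann–Liouville fractional derivative: at an interior
maximum point `t₀` of a `C¹` function on `[0,T]`, one has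
`D^α f(t₀) ≥ (t₀^{-α}/Γ(1-α)) f(t₀)`; in particular `D^α f(t₀) ≥ 0` if `f(t₀) ≥ 0`. -/
theorem rlDeriv_at_max (α T : ℝ) (hα0 : 0 < α) (hα1 : α < 1) (hT : 0 < T)
    (f : ℝ → ℝ) (hf : ContDiffOn ℝ 1 f (Icc 0 T))
    (t₀ : ℝ) (ht₀ : t₀ ∈ Ioo 0 T) (hmax : IsMaxOn f (Icc 0 T) t₀) :
    t₀ ^ (-α) / Real.Gamma (1 - α) * f t₀ ≤ rlDeriv α f t₀ ∧
      (0 ≤ f t₀ → 0 ≤ rlDeriv α f t₀) := by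
  obtain ⟨M, hM⟩ := hf.exists_norm_deriv_le hT
  have hfc : ContinuousOn f (Icc 0 T) := hf.continuousOn
  have hfd : DifferentiableOn ℝ f (Ioo 0 T) :=
    (hf.differentiableOn one_ne_zero).mono Ioo_subset_Icc_self
  have hβ : (0:ℝ) < 1 - α := by linarith
  have hsub : Icc 0 t₀ ⊆ Icc 0 T := Icc_subset_Icc_right ht₀.2.le
  have hgap : ∀ s ∈ Icc 0 t₀, f t₀ - f s ≤ M * (t₀ - s) := fun s hs =>
    (le_abs_self _).trans <| abs_sub_le_of_norm_deriv_le hs.2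
      (hfc.mono (Icc_subset_Icc hs.1 ht₀.2.le)) (hfd.mono (Ioo_subset_Ioo hs.1 ht₀.2.le))
      fun x hx => hM x (Ioo_subset_Ioo hs.1 ht₀.2.le hx)
  set H : ℝ → ℝ := fun t => f t₀ * rlInt (1 - α) (fun _ => 1) t - rlInt (1 - α) f t
  have hH : HasDerivAt H (f t₀ * (t₀ ^ (-α) / Real.Gamma (1 - α)) - rlDeriv α f t₀) t₀ := by
    have h1 := hasDerivAt_rlInt_one hβ ht₀.1.ne'
    rw [show 1 - α - 1 = -α by ring] at h1
    exact (h1.const_mul _).sub (differentiableAt_rlInt hβ hfc hfd hM ht₀).hasDerivAt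
  have hH_sub : ∀ᶠ t in 𝓝[<] t₀, H t₀ - H t ≤ M / Real.Gamma (1 - α) * (t₀ - t) ^ (2 - α) := by
    filter_upwards [Ioo_mem_nhdsLT ht₀.1] with t ht
    simp only [H, ← rlInt_const_sub (f t₀) hβ ht₀.1.le (hfc.mono hsub),
      ← rlInt_const_sub (f t₀) hβ ht.1.le (hfc.mono (hsub.trans' (Icc_subset_Icc_right ht.2.le)))]
    rw [show 2 - α = 1 - α + 1 by ring]
    exact rlInt_sub_rlInt_le ⟨hβ, by linarith⟩ ht.1.le ht.2.le
      (continuousOn_const.sub (hfc.mono hsub)) (fun s hs => sub_nonneg.2 (hmax (hsub hs))) hgap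
  have hD := hH.nonpos_of_sub_le_rpow (by linarith) hH_sub
  have hcoef : 0 ≤ t₀ ^ (-α) / Real.Gamma (1 - α) :=
    div_nonneg (Real.rpow_nonneg ht₀.1.le _) (Real.Gamma_pos_of_pos hβ).le
  have hmain : t₀ ^ (-α) / Real.Gamma (1 - α) * f t₀ ≤ rlDeriv α f t₀ := by
    linarith [mul_comm (f t₀) (t₀ ^ (-α) / Real.Gamma (1 - α))]
  exact ⟨hmain, fun h0 => (mul_nonneg hcoef h0).trans hmain⟩
end
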